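/- Let k ≥ 2, a ≥ 1 and d ≥ 1 be integers. Then there exists a prime q with k/2 < q ≤ k such that the q-adic valuation of the rational number ∏_{j=1}^k (j : ℚ)^{(−1)^{k−j}·binom(k,j)·j^a·d} (integer exponents, zpow) equals (−1)^{k−q}·binom(k,q)·q^a·d, which is nonzero; consequently ∏_{j=1}^k (j : ℚ)^{(−1)^{k−j}·binom(k,j)·j^a·d} ∉ {1, −1}. -/

import Mathlib

/-!
By Bertrand's postulate there is a prime `q` with `k/2 < q ≤ k`. Then `q` is the only multiple
of `q` in `[1, k]`, so the `q`-adic valuation of the product is exactly the exponent carried by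
`j = q`, namely `(-1)^(k-q) C(k,q) q^a d`, which is nonzero since `q ≤ k` and `d ≥ 1`.
A rational number of nonzero valuation is not `±1`.
-/

/-- `q`-adic valuation of a rational number, with `v_q(0) = ⊤`. -/
noncomputable def vpQ (q : ℕ) (x : ℚ) : WithTop ℤ :=
  if x = 0 then ⊤ else (padicValRat q x : WithTop ℤ)

/-- The integer exponent `(-1)^(k-j) * C(k,j) * j^a * d`. -/
def expnt (k a d j : ℕ) : ℤ :=
  (-1) ^ (k - j) * (k.choose j : ℤ) * (j : ℤ) ^ a * (d : ℤ)

theorem padicValRat_finset_prod {α : Type*} {p : ℕ} [Fact p.Prime] {s : Finset α} {f : α → ℚ}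
    (hf : ∀ i ∈ s, f i ≠ 0) :
    padicValRat p (∏ i ∈ s, f i) = ∑ i ∈ s, padicValRat p (f i) := by
  classical
  induction s using Finset.induction_on with
  | empty => simp
  | insert b t hb ih =>
    rw [Finset.forall_mem_insert] at hf
    rw [Finset.prod_insert hb, Finset.sum_insert hb,
      padicValRat.mul hf.1 (Finset.prod_ne_zero_iff.2 hf.2), ih hf.2]

theorem padicValRat_prod_Icc_zpow {q k : ℕ} [hq : Fact q.Prime] (hqk : q ≤ k) (hkq : k < 2 * q)
    (e : ℕ → ℤ) : padicValRat q (∏ j ∈ Finset.Icc 1 k, (j : ℚ) ^ e j) = e q := by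
  have hj0 : ∀ j ∈ Finset.Icc 1 k, (j : ℚ) ≠ 0 := fun j hj ↦ by
    rw [Finset.mem_Icc] at hj
    exact_mod_cast (by omega : j ≠ 0)
  rw [padicValRat_finset_prod fun j hj ↦ zpow_ne_zero _ (hj0 j hj),
    Finset.sum_eq_single_of_mem q (Finset.mem_Icc.2 ⟨hq.out.one_le, hqk⟩)]
  · simp [padicValRat.self hq.out.one_lt]
  · intro j hj hjq
    have hndvd : ¬ q ∣ j := fun hdvd ↦ by
      rw [Finset.mem_Icc] at hj
      exact hjq (Nat.eq_of_dvd_of_lt_two_mul (by omega) hdvd (by omega))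
    rw [padicValRat.zpow, padicValRat.of_nat, padicValNat.eq_zero_of_not_dvd hndvd]
    simp

theorem expnt_ne_zero {k a d j : ℕ} (hjk : j ≤ k) (hj : 0 < j) (hd : 0 < d) :
    expnt k a d j ≠ 0 := by
  have := Nat.choose_pos hjk
  simp only [expnt]
  positivity

theorem stmt10_general (k a d : ℕ) (hk : 2 ≤ k) (hd : 1 ≤ d) :
    ∃ q : ℕ, q.Prime ∧ k < 2 * q ∧ q ≤ k ∧
      vpQ q (∏ j ∈ Finset.Icc 1 k, (j : ℚ) ^ (expnt k a d j)) = (expnt k a d q : WithTop ℤ) ∧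
      expnt k a d q ≠ 0 ∧
      (∏ j ∈ Finset.Icc 1 k, (j : ℚ) ^ (expnt k a d j)) ≠ 1 ∧
      (∏ j ∈ Finset.Icc 1 k, (j : ℚ) ^ (expnt k a d j)) ≠ -1 := by
  obtain ⟨q, hq, hkq, hqk⟩ := Nat.exists_prime_lt_and_le_two_mul (k / 2) (by omega)
  have : Fact q.Prime := ⟨hq⟩
  set P := ∏ j ∈ Finset.Icc 1 k, (j : ℚ) ^ expnt k a d j
  have hval : padicValRat q P = expnt k a d q := padicValRat_prod_Icc_zpow (by omega) (by omega) _
  have hne : expnt k a d q ≠ 0 := expnt_ne_zero (by omega) hq.pos hd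
  have hP : P ≠ 0 := by rintro h; simp [h, eq_comm, hne] at hval
  refine ⟨q, hq, by omega, by omega, by rw [vpQ, if_neg hP, hval], hne, ?_, ?_⟩ <;>
    rintro h <;> simp [h, eq_comm, hne] at hval

theorem stmt10 (k a d : ℕ) (hk : 2 ≤ k) (ha : 1 ≤ a) (hd : 1 ≤ d) :
    ∃ q : ℕ, q.Prime ∧ k < 2 * q ∧ q ≤ k ∧
      vpQ q (∏ j ∈ Finset.Icc 1 k, (j : ℚ) ^ (expnt k a d j)) = (expnt k a d q : WithTop ℤ) ∧
      expnt k a d q ≠ 0 ∧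
      (∏ j ∈ Finset.Icc 1 k, (j : ℚ) ^ (expnt k a d j)) ≠ 1 ∧
      (∏ j ∈ Finset.Icc 1 k, (j : ℚ) ^ (expnt k a d j)) ≠ -1 :=
  stmt10_general k a d hk hd
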